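/- Let n ≥ 1. In the ring of formal power series in q with coefficients in the polynomial ring ℤ[t], let F_n(q,t) be the series whose coefficient of q^k is ∑_{a ∈ ℤ≥0^n, a_1+⋯+a_n = k} t^{d(a)} (a finite sum, hence a polynomial in t). Then (1 − q)·F_n(q,t) equals the series whose coefficient of q^k is ∑_{a ∈ ℤ≥0^n, a_n = 0, a_1+⋯+a_n = k} t^{d(a)}. -/

import Mathlib

/-- The statistic `d(a) = #{(i,j) : i < j and (a_i = a_j or a_j = a_i + 1)}`. -/
def dStat (n : ℕ) (a : Fin n → ℕ) : ℕ :=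
  (Finset.univ.filter fun p : Fin n × Fin n =>
    p.1 < p.2 ∧ (a p.1 = a p.2 ∨ a p.2 = a p.1 + 1)).card

/-- The series `F_n(q,t) = ∑_{a ∈ ℤ≥0^n} q^{a_1+⋯+a_n} t^{d(a)} ∈ (ℤ[t])[[q]]`: its
coefficient of `q^k` is the (finite) sum of `t^{d(a)}` over tuples `a` with `∑ a_i = k`. -/
noncomputable def Fser (n : ℕ) : PowerSeries (Polynomial ℤ) :=
  PowerSeries.mk fun k =>
    ∑ a ∈ Finset.Nat.antidiagonalTuple n k, (Polynomial.X : Polynomial ℤ) ^ dStat n a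

/-!
The map `ψ a = (a₂, …, aₙ, a₁ + 1)` is a bijection from the tuples of sum `k` onto the tuples of
sum `k + 1` with nonzero last entry, and it preserves `d`: with `xᵢ = n aᵢ - i`, a pair `i < j`
counts in `d(a)` exactly when `|xᵢ - xⱼ| < n`, and `ψ` acts on `x` by a cyclic rotation of the
indices followed by adding `1`. Hence `[q^{k+1}] F_n = [q^{k+1}] G + [q^k] F_n`, where `G` is the
right-hand side, i.e. `F_n = G + q F_n`.
-/

open Finset

theorem two_mul_card_filter_lt {α : Type*} [LinearOrder α] [Fintype α] (r : α → α → Prop)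
    [DecidableRel r] (hr : ∀ x y, r x y → r y x) :
    2 * #{p : α × α | p.1 < p.2 ∧ r p.1 p.2} = #{p : α × α | p.1 ≠ p.2 ∧ r p.1 p.2} := by
  have hswap : #{p : α × α | p.2 < p.1 ∧ r p.1 p.2} = #{p : α × α | p.1 < p.2 ∧ r p.1 p.2} :=
    card_equiv (Equiv.prodComm α α) fun p => by
      simpa using and_congr_right fun _ => ⟨hr _ _, hr _ _⟩
  rw [two_mul]
  nth_rw 2 [← hswap]
  rw [← card_union_of_disjoint (disjoint_filter.2 fun p _ h h' => lt_asymm h.1 h'.1)]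
  congr 1
  ext p
  simp only [mem_union, mem_filter, mem_univ, true_and, ne_iff_lt_or_gt]
  tauto

theorem card_filter_abs_sub_lt_comp_add {ι α : Type*} [Fintype ι] [DecidableEq ι]
    [AddCommGroup α] [LinearOrder α] [IsOrderedAddMonoid α] (σ : ι ≃ ι) (x : ι → α) (c r : α) :
    #{p : ι × ι | p.1 ≠ p.2 ∧ |(x (σ p.1) + c) - (x (σ p.2) + c)| < r} =
      #{p : ι × ι | p.1 ≠ p.2 ∧ |x p.1 - x p.2| < r} :=
  card_equiv (σ.prodCongr σ) fun p => by simp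

theorem eq_or_eq_add_one_iff_abs_sub_lt {n a b i j : ℕ} (hij : i < j) (hjn : j < i + n) :
    (a = b ∨ b = a + 1) ↔ |(n * a - i : ℤ) - (n * b - j)| < n := by
  rw [abs_lt]
  constructor
  · rintro (rfl | rfl) <;> push_cast <;> constructor <;> nlinarith
  · rintro ⟨hlower, hupper⟩
    have hlt : (b : ℤ) - a < 2 := by nlinarith
    have hge : 0 ≤ (b : ℤ) - a := by nlinarith
    omega

def tilt (n : ℕ) (a : Fin n → ℕ) (i : Fin n) : ℤ := n * a i - i

theorem dStat_eq_card_abs_tilt_sub_lt (n : ℕ) (a : Fin n → ℕ) :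
    dStat n a = #{p : Fin n × Fin n | p.1 < p.2 ∧ |tilt n a p.1 - tilt n a p.2| < n} := by
  unfold dStat
  congr 1
  exact filter_congr fun p _ =>
    and_congr_right fun hp => eq_or_eq_add_one_iff_abs_sub_lt hp (by omega)

section rotateSucc

variable {m : ℕ}

def rotateSucc (a : Fin (m + 1) → ℕ) : Fin (m + 1) → ℕ :=
  a ∘ finRotate (m + 1) + Pi.single (Fin.last m) 1

theorem rotateSucc_apply_last (a : Fin (m + 1) → ℕ) : rotateSucc a (Fin.last m) = a 0 + 1 := by
  simp [rotateSucc]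

theorem rotateSucc_apply_of_ne_last (a : Fin (m + 1) → ℕ) {i : Fin (m + 1)}
    (hi : i ≠ Fin.last m) : rotateSucc a i = a (finRotate (m + 1) i) := by
  simp [rotateSucc, hi]

theorem sum_rotateSucc (a : Fin (m + 1) → ℕ) : ∑ i, rotateSucc a i = ∑ i, a i + 1 := by
  simp only [rotateSucc, Pi.add_apply, Function.comp_apply, sum_add_distrib, Equiv.sum_comp,
    sum_pi_single', mem_univ, if_true]

theorem rotateSucc_injective : Function.Injective (rotateSucc (m := m)) := by
  intro a b h
  funext i
  simpa [rotateSucc] using congrFun h ((finRotate (m + 1)).symm i)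

theorem exists_rotateSucc_eq (b : Fin (m + 1) → ℕ) (hb : b (Fin.last m) ≠ 0) :
    ∃ a, rotateSucc a = b := by
  refine ⟨(b - Pi.single (Fin.last m) 1) ∘ (finRotate (m + 1)).symm, funext fun i => ?_⟩
  simp only [rotateSucc, Pi.add_apply, Function.comp_apply, Equiv.symm_apply_apply, Pi.sub_apply]
  by_cases hi : i = Fin.last m
  · subst hi
    simp only [Pi.single_eq_same]
    omega
  · simp [hi]

theorem filter_last_ne_zero_antidiagonalTuple_succ (k : ℕ) :
    (Nat.antidiagonalTuple (m + 1) (k + 1)).filter (fun b => b (Fin.last m) ≠ 0) =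
      (Nat.antidiagonalTuple (m + 1) k).map ⟨rotateSucc, rotateSucc_injective⟩ := by
  ext b
  simp only [mem_filter, Nat.mem_antidiagonalTuple, mem_map, Function.Embedding.coeFn_mk]
  constructor
  · rintro ⟨hsum, hb⟩
    obtain ⟨a, rfl⟩ := exists_rotateSucc_eq b hb
    exact ⟨a, by rw [sum_rotateSucc] at hsum; omega, rfl⟩
  · rintro ⟨a, ha, rfl⟩
    exact ⟨by rw [sum_rotateSucc, ha], by simp [rotateSucc_apply_last]⟩

theorem tilt_rotateSucc (a : Fin (m + 1) → ℕ) :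
    tilt (m + 1) (rotateSucc a) = fun i => tilt (m + 1) a (finRotate (m + 1) i) + 1 := by
  funext i
  by_cases hi : i = Fin.last m
  · subst hi
    simp only [tilt, rotateSucc_apply_last, finRotate_last, Fin.val_last, Fin.val_zero]
    push_cast
    ring
  · simp only [tilt, rotateSucc_apply_of_ne_last a hi, coe_finRotate_of_ne_last hi]
    push_cast
    ring

theorem dStat_rotateSucc (a : Fin (m + 1) → ℕ) :
    dStat (m + 1) (rotateSucc a) = dStat (m + 1) a := by
  have hsymm (x : Fin (m + 1) → ℤ) (i j : Fin (m + 1)) :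
      |x i - x j| < (m + 1 : ℕ) → |x j - x i| < (m + 1 : ℕ) := by
    rw [abs_sub_comm]
    exact id
  apply Nat.eq_of_mul_eq_mul_left two_pos
  rw [dStat_eq_card_abs_tilt_sub_lt, dStat_eq_card_abs_tilt_sub_lt,
    two_mul_card_filter_lt _ (hsymm _), two_mul_card_filter_lt _ (hsymm _), tilt_rotateSucc,
    card_filter_abs_sub_lt_comp_add]

end rotateSucc

/-- For `n ≥ 1`, in `(ℤ[t])[[q]]` one has
`(1 - q) · F_n(q,t) = ∑_{a ∈ ℤ≥0^n, a_n = 0} q^{a_1+⋯+a_n} t^{d(a)}`. -/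
theorem statement12 (n : ℕ) (hn : 0 < n) :
    (1 - PowerSeries.X) * Fser n =
      PowerSeries.mk fun k =>
        ∑ a ∈ (Finset.Nat.antidiagonalTuple n k).filter
            (fun a => a ⟨n - 1, by omega⟩ = 0),
          (Polynomial.X : Polynomial ℤ) ^ dStat n a := by
  obtain ⟨m, rfl⟩ : ∃ m, n = m + 1 := ⟨n - 1, by omega⟩
  simp only [show (⟨m + 1 - 1, by omega⟩ : Fin (m + 1)) = Fin.last m from rfl]
  set G : PowerSeries (Polynomial ℤ) := PowerSeries.mk _
  suffices Fser (m + 1) = G + PowerSeries.X * Fser (m + 1) by linear_combination this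
  ext (_ | k)
  · rw [map_add, PowerSeries.coeff_zero_X_mul, add_zero]
    simp only [Fser, G, PowerSeries.coeff_mk]
    rw [filter_true_of_mem fun a ha => ?_]
    rw [Nat.antidiagonalTuple_zero_right, mem_singleton] at ha
    rw [ha, Pi.zero_apply]
  · rw [map_add, PowerSeries.coeff_succ_X_mul]
    simp only [Fser, G, PowerSeries.coeff_mk]
    rw [← sum_filter_add_sum_filter_not _ (fun a => a (Fin.last m) = 0),
      filter_last_ne_zero_antidiagonalTuple_succ, sum_map]
    simp only [Function.Embedding.coeFn_mk, dStat_rotateSucc]
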